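/- arXiv:1701.04165 — 3 statements merged into one kernel-verified Lean document; each statement's English description precedes it below -/
import Mathlib

section
/- For every positive integer m, there exists a binary [6m+1, 2, 4m] LCD code; hence LCD[6m+1,2] = ⌊2(6m+1)/3⌋. -/
open Matrix

/-- The dual code of a binary linear code `C ⊆ GF(2)^n` under the standard bilinear form. -/
def dualCode {n : ℕ} (C : Submodule (ZMod 2) (Fin n → ZMod 2)) :
    Submodule (ZMod 2) (Fin n → ZMod 2) where
  carrier := {v | ∀ c ∈ C, v ⬝ᵥ c = 0}
  add_mem' := by
    intro a b ha hb c hc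
    simp [add_dotProduct, ha c hc, hb c hc]
  zero_mem' := by
    intro c hc
    simp
  smul_mem' := by
    intro r a ha c hc
    simp [smul_dotProduct, ha c hc]

/-- A linear code is LCD if it intersects its dual trivially. -/
def isLCD {n : ℕ} (C : Submodule (ZMod 2) (Fin n → ZMod 2)) : Prop :=
  C ⊓ dualCode C = ⊥

/-- `C` has minimum distance `d`: every nonzero codeword has Hamming weight at least `d`,
and some nonzero codeword has Hamming weight exactly `d`. -/
def hasMinDist {n : ℕ} (C : Submodule (ZMod 2) (Fin n → ZMod 2)) (d : ℕ) : Prop :=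
  (∀ v ∈ C, v ≠ 0 → d ≤ hammingNorm v) ∧ ∃ v ∈ C, v ≠ 0 ∧ hammingNorm v = d

/-- `LCDmax n k` is the largest minimum distance among binary `[n,k]` LCD codes. -/
noncomputable def LCDmax (n k : ℕ) : ℕ :=
  sSup {d | ∃ C : Submodule (ZMod 2) (Fin n → ZMod 2),
    Module.finrank (ZMod 2) ↥C = k ∧ hasMinDist C d ∧ isLCD C}

/-!
Two words `u = 1^{4m} 0^{2m+1}` and `v = 0^{2m+1} 1^{4m}` overlapping in `2m - 1` positions have
even weights and odd inner product, so their Gram matrix is `[[0,1],[1,0]]`, and a code with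
invertible Gram matrix is LCD. The nonzero codewords have weights `4m`, `4m`, `4m + 2`. Conversely,
in a two-dimensional binary code every coordinate is nonzero in at most two of the three nonzero
codewords, so `3d ≤ 2n`, i.e. `d ≤ 4m` for `n = 6m + 1`.
-/

open Finset

theorem ZMod.eq_zero_or_eq_one_of_two (a : ZMod 2) : a = 0 ∨ a = 1 := by
  revert a
  decide

section BinaryWords

variable {ι : Type*} [Fintype ι]

def supportOverlap (x y : ι → ZMod 2) : ℕ := #{i | x i ≠ 0 ∧ y i ≠ 0}

theorem hammingNorm_eq_sum {β : Type*} [Zero β] [DecidableEq β] (x : ι → β) :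
    hammingNorm x = ∑ i, if x i ≠ 0 then 1 else 0 :=
  card_filter _ _

theorem hammingNorm_add_add_two_mul_supportOverlap (x y : ι → ZMod 2) :
    hammingNorm (x + y) + 2 * supportOverlap x y = hammingNorm x + hammingNorm y := by
  simp only [supportOverlap, card_filter, hammingNorm_eq_sum, mul_sum, ← sum_add_distrib,
    Pi.add_apply]
  refine sum_congr rfl fun i _ => ?_
  have key : ∀ a b : ZMod 2, (if a + b ≠ 0 then 1 else 0) + 2 * (if a ≠ 0 ∧ b ≠ 0 then 1 else 0) =
      (if a ≠ 0 then 1 else 0) + if b ≠ 0 then 1 else 0 := by decide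
  exact key (x i) (y i)

theorem hammingNorm_add_hammingNorm_add_hammingNorm_add_le (x y : ι → ZMod 2) :
    hammingNorm x + hammingNorm y + hammingNorm (x + y) ≤ 2 * Fintype.card ι := by
  rw [Fintype.card, card_eq_sum_ones, mul_sum]
  simp only [hammingNorm_eq_sum, ← sum_add_distrib, Pi.add_apply]
  refine sum_le_sum fun i _ => ?_
  have key : ∀ a b : ZMod 2, (if a ≠ 0 then 1 else 0) + (if b ≠ 0 then 1 else 0) +
      (if a + b ≠ 0 then 1 else 0) ≤ 2 * 1 := by decide
  exact key (x i) (y i)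

theorem dotProduct_eq_supportOverlap (x y : ι → ZMod 2) : x ⬝ᵥ y = supportOverlap x y := by
  simp only [dotProduct, supportOverlap, card_filter, Nat.cast_sum, Nat.cast_ite, Nat.cast_one,
    Nat.cast_zero]
  refine sum_congr rfl fun i _ => ?_
  have key : ∀ a b : ZMod 2, a * b = if a ≠ 0 ∧ b ≠ 0 then 1 else 0 := by decide
  exact key (x i) (y i)

theorem dotProduct_self_eq_hammingNorm (x : ι → ZMod 2) : x ⬝ᵥ x = hammingNorm x := by
  simp [dotProduct_eq_supportOverlap, supportOverlap, hammingNorm]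

end BinaryWords

theorem Fin.card_filter_val_mem_Ico {n a b : ℕ} (hb : b ≤ n) :
    #{i : Fin n | a ≤ i.val ∧ i.val < b} = b - a := by
  rw [← Nat.card_Ico, ← card_map Fin.valEmbedding]
  congr 1
  ext k
  simp only [mem_map, mem_filter, mem_univ, true_and, Fin.valEmbedding_apply, mem_Ico]
  exact ⟨fun ⟨i, hi, hik⟩ => hik ▸ hi, fun hk => ⟨⟨k, by omega⟩, hk, rfl⟩⟩

section IntervalWord

def intervalWord (n a b : ℕ) : Fin n → ZMod 2 := fun i => if a ≤ i.val ∧ i.val < b then 1 else 0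

variable {n a b c d : ℕ}

theorem intervalWord_ne_zero_iff {i : Fin n} :
    intervalWord n a b i ≠ 0 ↔ a ≤ i.val ∧ i.val < b := by
  unfold intervalWord
  split_ifs <;> simp_all

theorem hammingNorm_intervalWord (hb : b ≤ n) : hammingNorm (intervalWord n a b) = b - a := by
  simp only [hammingNorm, intervalWord_ne_zero_iff]
  exact Fin.card_filter_val_mem_Ico hb

theorem supportOverlap_intervalWord (h : min b d ≤ n) :
    supportOverlap (intervalWord n a b) (intervalWord n c d) = min b d - max a c := by
  simp only [supportOverlap, intervalWord_ne_zero_iff]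
  rw [← Fin.card_filter_val_mem_Ico h]
  congr 1
  ext i
  simp only [mem_filter, mem_univ, true_and]
  omega

end IntervalWord

section HyperbolicPair

variable {R : Type*} [CommRing R] {ι : Type*} [Fintype ι]

def IsHyperbolicPair (u v : ι → R) : Prop := u ⬝ᵥ u = 0 ∧ v ⬝ᵥ v = 0 ∧ u ⬝ᵥ v = 1

variable {u v : ι → R}

theorem IsHyperbolicPair.smul_add_smul_dotProduct (h : IsHyperbolicPair u v) (a b : R) :
    (a • u + b • v) ⬝ᵥ u = b ∧ (a • u + b • v) ⬝ᵥ v = a := by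
  obtain ⟨huu, hvv, huv⟩ := h
  simp only [add_dotProduct, smul_dotProduct, huu, hvv, dotProduct_comm v u, huv, smul_eq_mul]
  constructor <;> ring

theorem IsHyperbolicPair.linearIndependent [Nontrivial R] (h : IsHyperbolicPair u v) :
    LinearIndependent R ![u, v] := by
  refine LinearIndependent.pair_iff.2 fun a b hab => ?_
  obtain ⟨hu, hv⟩ := h.smul_add_smul_dotProduct a b
  rw [hab, zero_dotProduct] at hu hv
  exact ⟨hv.symm, hu.symm⟩

theorem IsHyperbolicPair.finrank_span [Nontrivial R] (h : IsHyperbolicPair u v) :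
    Module.finrank R (Submodule.span R {u, v}) = 2 := by
  have := finrank_span_eq_card h.linearIndependent
  rwa [Matrix.range_cons_cons_empty, Fintype.card_fin] at this

end HyperbolicPair

section SpanPair

variable {n : ℕ} {u v : Fin n → ZMod 2}

theorem mem_span_pair_zmod_two {x : Fin n → ZMod 2} (hx : x ∈ Submodule.span (ZMod 2) {u, v}) :
    x = 0 ∨ x = u ∨ x = v ∨ x = u + v := by
  obtain ⟨a, b, rfl⟩ := Submodule.mem_span_pair.1 hx
  rcases a.eq_zero_or_eq_one_of_two with rfl | rfl <;>
    rcases b.eq_zero_or_eq_one_of_two with rfl | rfl <;> simp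

theorem IsHyperbolicPair.isLCD_span (h : IsHyperbolicPair u v) :
    isLCD (Submodule.span (ZMod 2) {u, v}) := by
  refine eq_bot_iff.2 fun x ⟨hxC, hxD⟩ => ?_
  obtain ⟨a, b, rfl⟩ := Submodule.mem_span_pair.1 hxC
  obtain ⟨hu, hv⟩ := h.smul_add_smul_dotProduct a b
  rw [hxD u (Submodule.subset_span (by simp))] at hu
  rw [hxD v (Submodule.subset_span (by simp))] at hv
  simp [← hu, ← hv]

theorem hasMinDist_span_pair {d : ℕ} (hd : 0 < d) (hu : hammingNorm u = d)
    (hv : d ≤ hammingNorm v) (huv : d ≤ hammingNorm (u + v)) :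
    hasMinDist (Submodule.span (ZMod 2) {u, v}) d := by
  refine ⟨fun x hx hx0 => ?_, u, Submodule.subset_span (by simp),
    hammingNorm_pos_iff.1 (hu ▸ hd), hu⟩
  rcases mem_span_pair_zmod_two hx with rfl | rfl | rfl | rfl
  exacts [absurd rfl hx0, hu.ge, hv, huv]

end SpanPair

theorem three_mul_le_two_mul_of_finrank_eq_two {n d : ℕ}
    {C : Submodule (ZMod 2) (Fin n → ZMod 2)} (hC : Module.finrank (ZMod 2) C = 2)
    (hd : hasMinDist C d) : 3 * d ≤ 2 * n := by
  obtain ⟨v, hvC, hv0, -⟩ := hd.2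
  have hlt : Submodule.span (ZMod 2) {v} < C :=
    Submodule.lt_of_le_of_finrank_lt_finrank (Submodule.span_le.2 (by simpa))
      (by rw [finrank_span_singleton hv0, hC]; norm_num)
  obtain ⟨w, hwC, hw⟩ := SetLike.exists_of_lt hlt
  have hw0 : w ≠ 0 := fun h => hw (h ▸ zero_mem _)
  have hvw0 : v + w ≠ 0 := fun h => hw <| by
    rw [eq_neg_of_add_eq_zero_right h]
    exact neg_mem (Submodule.mem_span_singleton_self v)
  have hdv := hd.1 v hvC hv0
  have hdw := hd.1 w hwC hw0
  have hdvw := hd.1 (v + w) (C.add_mem hvC hwC) hvw0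
  have hsum := hammingNorm_add_hammingNorm_add_hammingNorm_add_le v w
  rw [Fintype.card_fin] at hsum
  omega

section Witness

variable {m : ℕ}

def witnessCode (m : ℕ) : Submodule (ZMod 2) (Fin (6 * m + 1) → ZMod 2) :=
  Submodule.span (ZMod 2) {intervalWord _ 0 (4 * m), intervalWord _ (2 * m + 1) (6 * m + 1)}

theorem supportOverlap_witness :
    supportOverlap (intervalWord (6 * m + 1) 0 (4 * m))
      (intervalWord (6 * m + 1) (2 * m + 1) (6 * m + 1)) = 2 * m - 1 := by
  rw [supportOverlap_intervalWord (by omega)]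
  omega

theorem isHyperbolicPair_witness (hm : 1 ≤ m) :
    IsHyperbolicPair (intervalWord (6 * m + 1) 0 (4 * m))
      (intervalWord (6 * m + 1) (2 * m + 1) (6 * m + 1)) := by
  simp only [IsHyperbolicPair, dotProduct_self_eq_hammingNorm, dotProduct_eq_supportOverlap,
    hammingNorm_intervalWord (show 4 * m ≤ 6 * m + 1 by omega), hammingNorm_intervalWord le_rfl,
    supportOverlap_witness, ZMod.natCast_eq_zero_iff_even, ZMod.natCast_eq_one_iff_odd]
  exact ⟨⟨2 * m, by omega⟩, ⟨2 * m, by omega⟩, ⟨m - 1, by omega⟩⟩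

theorem hasMinDist_witnessCode (hm : 1 ≤ m) : hasMinDist (witnessCode m) (4 * m) := by
  have hu := hammingNorm_intervalWord (a := 0) (show 4 * m ≤ 6 * m + 1 by omega)
  have hv := hammingNorm_intervalWord (a := 2 * m + 1) (le_refl (6 * m + 1))
  have huv := hammingNorm_add_add_two_mul_supportOverlap (intervalWord (6 * m + 1) 0 (4 * m))
    (intervalWord (6 * m + 1) (2 * m + 1) (6 * m + 1))
  rw [hu, hv, supportOverlap_witness] at huv
  exact hasMinDist_span_pair (by omega) hu (by omega) (by omega)

end Witness

/-- For every positive integer `m` there is a binary `[6m+1, 2, 4m]` LCD code;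
hence `LCD[6m+1, 2] = ⌊2(6m+1)/3⌋`. -/
theorem lcd_6m_add_one (m : ℕ) (hm : 1 ≤ m) :
    (∃ C : Submodule (ZMod 2) (Fin (6 * m + 1) → ZMod 2),
      Module.finrank (ZMod 2) ↥C = 2 ∧ hasMinDist C (4 * m) ∧ isLCD C) ∧
    LCDmax (6 * m + 1) 2 = 2 * (6 * m + 1) / 3 := by
  have hex : ∃ C : Submodule (ZMod 2) (Fin (6 * m + 1) → ZMod 2),
      Module.finrank (ZMod 2) ↥C = 2 ∧ hasMinDist C (4 * m) ∧ isLCD C :=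
    ⟨witnessCode m, (isHyperbolicPair_witness hm).finrank_span, hasMinDist_witnessCode hm,
      (isHyperbolicPair_witness hm).isLCD_span⟩
  refine ⟨hex, ?_⟩
  rw [show 2 * (6 * m + 1) / 3 = 4 * m by omega]
  refine IsGreatest.csSup_eq ⟨hex, ?_⟩
  rintro d ⟨C, hC, hd, -⟩
  have := three_mul_le_two_mul_of_finrank_eq_two hC hd
  omega
end

section
/- For any integers i ≥ 2 and n ≥ 2^i, there exists a binary [n, n−i, 2] LCD code; consequently LCD[n, n−i] = 2 for all n ≥ 2^i. -/
open Matrix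

/-!
The code `x ↦ (x, ∑ x, ∑ x, 0, …, 0)` has a generator matrix `G` with `G Gᵀ = 1`, so it is LCD,
and each nonzero codeword has weight at least two: either `∑ x ≠ 0` shows up twice, or `x` itself
has two nonzero entries. Conversely, an `[n, n - i]` code has `2 ^ i ≤ n` cosets, fewer than the
`n + 1` vectors of weight at most one, so two of these differ by a nonzero codeword of weight at
most two.
-/

open Function

section Hamming

variable {ι R : Type*} [Fintype ι] [DecidableEq R]

theorem two_le_hammingNorm [Zero R] {v : ι → R} {a b : ι} (hab : a ≠ b) (ha : v a ≠ 0)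
    (hb : v b ≠ 0) : 2 ≤ hammingNorm v :=
  Finset.one_lt_card_iff.mpr ⟨a, b, by simpa using ha, by simpa using hb, hab⟩

theorem hammingNorm_sub_le [AddCommGroup R] (x y : ι → R) :
    hammingNorm (x - y) ≤ hammingNorm x + hammingNorm y := by
  rw [← neg_add_eq_sub, ← hammingDist_eq_hammingNorm, hammingDist_comm, ← hammingDist_zero_right,
    ← hammingDist_zero_left]
  exact hammingDist_triangle x 0 y

theorem hammingNorm_single_le [DecidableEq ι] [Zero R] (i : ι) (r : R) :
    hammingNorm (Pi.single (M := fun _ => R) i r) ≤ 1 := by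
  refine Finset.card_le_one.mpr fun a ha b hb => ?_
  simp only [Finset.mem_filter, Finset.mem_univ, true_and] at ha hb
  rw [Pi.single_apply] at ha hb
  rw [(ite_ne_right_iff.mp ha).1, (ite_ne_right_iff.mp hb).1]

theorem Submodule.exists_mem_ne_zero_hammingNorm_le_of_card_lt [Ring R]
    (C : Submodule R (ι → R)) [Finite ((ι → R) ⧸ C)] {α : Type*} (f : α → ι → R)
    (hf : Injective f) {w : ℕ} (hw : ∀ a, hammingNorm (f a) ≤ w)
    (hcard : Nat.card ((ι → R) ⧸ C) < Nat.card α) :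
    ∃ v ∈ C, v ≠ 0 ∧ hammingNorm v ≤ 2 * w := by
  obtain ⟨a, b, hfab, hab⟩ : ∃ a b, C.mkQ (f a) = C.mkQ (f b) ∧ a ≠ b := by
    simpa [Injective] using mt (Nat.card_le_card_of_injective (C.mkQ ∘ f)) hcard.not_ge
  refine ⟨f a - f b, (Submodule.Quotient.eq C).mp hfab, sub_ne_zero.mpr (hf.ne hab), ?_⟩
  linarith [hammingNorm_sub_le (f a) (f b), hw a, hw b]

theorem Submodule.exists_mem_ne_zero_hammingNorm_le_two [DecidableEq ι] [Ring R] [Nontrivial R]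
    (C : Submodule R (ι → R)) [Finite ((ι → R) ⧸ C)]
    (h : Nat.card ((ι → R) ⧸ C) ≤ Fintype.card ι) : ∃ v ∈ C, v ≠ 0 ∧ hammingNorm v ≤ 2 := by
  let f : Option ι → ι → R := fun o => o.elim 0 (Pi.single · 1)
  have hf : Injective f := by
    rintro (_ | a) (_ | b) hab
    · rfl
    · simpa [f] using congrFun hab b
    · simpa [f] using congrFun hab a
    · simpa [f, Pi.single_apply, eq_comm] using congrFun hab a
  have hw : ∀ o, hammingNorm (f o) ≤ 1 := by
    rintro (_ | a)
    · simp [f]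
    · exact hammingNorm_single_le a 1
  simpa using C.exists_mem_ne_zero_hammingNorm_le_of_card_lt f hf hw
    (by rw [Nat.card_eq_fintype_card (α := Option ι), Fintype.card_option]; omega)

end Hamming

theorem Submodule.exists_mem_ne_zero_hammingNorm_le_two_of_card_pow_le {ι K : Type*}
    [Fintype ι] [DecidableEq ι] [Field K] [Fintype K] [DecidableEq K] (C : Submodule K (ι → K))
    (h : Fintype.card K ^ (Fintype.card ι - Module.finrank K C) ≤ Fintype.card ι) :
    ∃ v ∈ C, v ≠ 0 ∧ hammingNorm v ≤ 2 := by
  refine C.exists_mem_ne_zero_hammingNorm_le_two (le_of_eq_of_le ?_ h)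
  rw [Module.natCard_eq_pow_finrank (K := K), Submodule.finrank_quotient, Module.finrank_pi,
    Nat.card_eq_fintype_card]

section BinaryCode

variable {n : ℕ} {C : Submodule (ZMod 2) (Fin n → ZMod 2)}

theorem hasMinDist.le_two {d : ℕ} (hd : hasMinDist C d)
    (h : 2 ^ (n - Module.finrank (ZMod 2) C) ≤ n) : d ≤ 2 := by
  obtain ⟨v, hvC, hv0, hv⟩ :=
    C.exists_mem_ne_zero_hammingNorm_le_two_of_card_pow_le (by simpa using h)
  exact (hd.1 v hvC hv0).trans hv

theorem hasMinDist_two_of_two_le_hammingNorm (hC : ∀ v ∈ C, v ≠ 0 → 2 ≤ hammingNorm v)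
    (h : 2 ^ (n - Module.finrank (ZMod 2) C) ≤ n) : hasMinDist C 2 := by
  obtain ⟨v, hvC, hv0, hv⟩ :=
    C.exists_mem_ne_zero_hammingNorm_le_two_of_card_pow_le (by simpa using h)
  exact ⟨hC, v, hvC, hv0, hv.antisymm (hC v hvC hv0)⟩

end BinaryCode

section OrthonormalRows

variable {κ ι R : Type*} [Fintype κ] [Fintype ι] [DecidableEq κ] [CommRing R] {G : Matrix κ ι R}

theorem Matrix.vecMul_dotProduct_vecMul_of_mul_transpose_eq_one (hG : G * Gᵀ = 1)
    (x y : κ → R) : x ᵥ* G ⬝ᵥ y ᵥ* G = x ⬝ᵥ y := by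
  rw [← dotProduct_mulVec, ← vecMul_transpose, vecMul_vecMul, hG, vecMul_one]

theorem Matrix.vecMul_injective_of_mul_transpose_eq_one (hG : G * Gᵀ = 1) :
    Injective (· ᵥ* G) :=
  LeftInverse.injective (g := (· ᵥ* Gᵀ)) fun x => by simp only [vecMul_vecMul, hG, vecMul_one]

theorem isLCD_range_vecMulLinear {n : ℕ} {G : Matrix κ (Fin n) (ZMod 2)} (hG : G * Gᵀ = 1) :
    isLCD (LinearMap.range G.vecMulLinear) := by
  refine eq_bot_iff.mpr ?_
  rintro _ ⟨⟨x, rfl⟩, hx⟩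
  suffices x = 0 by simp [this]
  ext m
  simpa only [Matrix.vecMulLinear_apply,
    Matrix.vecMul_dotProduct_vecMul_of_mul_transpose_eq_one hG, dotProduct_single, mul_one,
    Pi.zero_apply] using hx _ ⟨Pi.single m 1, rfl⟩

theorem finrank_range_vecMulLinear [Nontrivial R] (hG : G * Gᵀ = 1) :
    Module.finrank R (LinearMap.range G.vecMulLinear) = Fintype.card κ := by
  rw [LinearMap.finrank_range_of_inj (Matrix.vecMul_injective_of_mul_transpose_eq_one hG),
    Module.finrank_fintype_fun_eq_card]

end OrthonormalRows

section DoubleParity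

variable {κ ι : Type*} [DecidableEq ι] {a : κ → ι} {p q : ι}

/-- Rows `e (a m) + e p + e q`: each row has weight three and two distinct rows overlap exactly in
the parity positions `p, q`, hence `G * Gᵀ = 1` over `ZMod 2`. This is the witness `[I | J]` with
`J` of width two. -/
def doubleParityMatrix (a : κ → ι) (p q : ι) : Matrix κ ι (ZMod 2) :=
  fun m => Pi.single (a m) 1 + Pi.single p 1 + Pi.single q 1

theorem doubleParityMatrix_mul_transpose [DecidableEq κ] [Fintype ι] (ha : Injective a)
    (hp : ∀ m, a m ≠ p) (hq : ∀ m, a m ≠ q) (hpq : p ≠ q) :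
    doubleParityMatrix a p q * (doubleParityMatrix a p q)ᵀ = 1 := by
  ext m m'
  show doubleParityMatrix a p q m ⬝ᵥ doubleParityMatrix a p q m' = (1 : Matrix κ κ _) m m'
  simp [doubleParityMatrix, Matrix.one_apply, Pi.single_apply, ha.eq_iff, hp, hq, hpq, hpq.symm,
    eq_comm, dotProduct_add, add_assoc, CharTwo.add_self_eq_zero]

theorem vecMul_doubleParityMatrix_apply_left [Fintype κ] [DecidableEq κ] (ha : Injective a)
    (hp : ∀ m, a m ≠ p) (hq : ∀ m, a m ≠ q) (x : κ → ZMod 2) (m : κ) :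
    (x ᵥ* doubleParityMatrix a p q) (a m) = x m := by
  simp [Matrix.vecMul, dotProduct, doubleParityMatrix, Pi.single_apply, ha.eq_iff, hp, hq]

theorem vecMul_doubleParityMatrix_apply_p [Fintype κ] (hp : ∀ m, a m ≠ p) (hpq : p ≠ q)
    (x : κ → ZMod 2) :
    (x ᵥ* doubleParityMatrix a p q) p = ∑ m, x m := by
  simp [Matrix.vecMul, dotProduct, doubleParityMatrix, hp, hpq]

theorem vecMul_doubleParityMatrix_apply_q [Fintype κ] (hq : ∀ m, a m ≠ q) (hpq : p ≠ q)
    (x : κ → ZMod 2) :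
    (x ᵥ* doubleParityMatrix a p q) q = ∑ m, x m := by
  simp [Matrix.vecMul, dotProduct, doubleParityMatrix, hq, hpq]

theorem two_le_hammingNorm_vecMul_doubleParityMatrix [Fintype κ] [DecidableEq κ] [Fintype ι]
    (ha : Injective a) (hp : ∀ m, a m ≠ p) (hq : ∀ m, a m ≠ q) (hpq : p ≠ q) {x : κ → ZMod 2}
    (hx : x ≠ 0) : 2 ≤ hammingNorm (x ᵥ* doubleParityMatrix a p q) := by
  by_cases hsum : ∑ m, x m = 0
  · obtain ⟨m, hm⟩ := ne_iff.mp hx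
    obtain ⟨m', hm'm, hm'⟩ : ∃ m' ≠ m, x m' ≠ 0 := by
      by_contra! h
      exact hm (by rw [← Fintype.sum_eq_single m h, hsum, Pi.zero_apply])
    exact two_le_hammingNorm (ha.ne hm'm.symm)
      (by rwa [vecMul_doubleParityMatrix_apply_left ha hp hq])
      (by rwa [vecMul_doubleParityMatrix_apply_left ha hp hq])
  · exact two_le_hammingNorm hpq (by rwa [vecMul_doubleParityMatrix_apply_p hp hpq])
      (by rwa [vecMul_doubleParityMatrix_apply_q hq hpq])

end DoubleParity

/-- For `i ≥ 2` and `n ≥ 2^i`, there exists a binary `[n, n−i, 2]` LCD code; consequently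
`LCD[n, n−i] = 2`. -/
theorem lcd_codim (n i : ℕ) (hi : 2 ≤ i) (hn : 2 ^ i ≤ n) :
    (∃ C : Submodule (ZMod 2) (Fin n → ZMod 2),
      Module.finrank (ZMod 2) ↥C = n - i ∧ hasMinDist C 2 ∧ isLCD C) ∧
    LCDmax n (n - i) = 2 := by
  have hin : i ≤ n := Nat.lt_two_pow_self.le.trans hn
  have hcodim {D : Submodule (ZMod 2) (Fin n → ZMod 2)}
      (hD : Module.finrank (ZMod 2) D = n - i) : 2 ^ (n - Module.finrank (ZMod 2) D) ≤ n := by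
    rwa [hD, Nat.sub_sub_self hin]
  let a : Fin (n - i) → Fin n := Fin.castLE (Nat.sub_le n i)
  let p : Fin n := ⟨n - i, by omega⟩
  let q : Fin n := ⟨n - i + 1, by omega⟩
  have ha : Injective a := Fin.castLE_injective _
  have hp : ∀ m, a m ≠ p := fun m => Fin.ne_of_val_ne m.isLt.ne
  have hq : ∀ m, a m ≠ q := fun m => Fin.ne_of_val_ne (by simp [a, q]; omega)
  have hpq : p ≠ q := Fin.ne_of_val_ne (by simp [p, q])
  have hG := doubleParityMatrix_mul_transpose ha hp hq hpq
  let C := LinearMap.range (doubleParityMatrix a p q).vecMulLinear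
  have hrank : Module.finrank (ZMod 2) C = n - i := by
    rw [finrank_range_vecMulLinear hG, Fintype.card_fin]
  have hmin : hasMinDist C 2 := by
    refine hasMinDist_two_of_two_le_hammingNorm ?_ (hcodim hrank)
    rintro _ ⟨x, rfl⟩ hx
    exact two_le_hammingNorm_vecMul_doubleParityMatrix ha hp hq hpq (by rintro rfl; simp at hx)
  have hC : 2 ∈ {d | ∃ C : Submodule (ZMod 2) (Fin n → ZMod 2),
      Module.finrank (ZMod 2) ↥C = n - i ∧ hasMinDist C d ∧ isLCD C} :=
    ⟨C, hrank, hmin, isLCD_range_vecMulLinear hG⟩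
  exact ⟨hC, IsGreatest.csSup_eq ⟨hC, fun d ⟨D, hD, hd, _⟩ => hd.le_two (hcodim hD)⟩⟩
end

section
/- If k ≥ 3 is odd, then every binary [n,k] LCD code contains an [n, k−1] LCD subcode; consequently LCD[n,k] ≤ LCD[n,k−1] for any n ≥ k. -/
open Matrix

/-!
An odd-dimensional LCD code `C` contains a word `e` of odd weight, i.e. `e ⬝ᵥ e = 1`: otherwise
the Gram matrix of a basis of `C` is an invertible symmetric matrix over `GF(2)` of odd size with
zero diagonal, but such a determinant vanishes, since the terms of `σ` and `σ⁻¹` cancel and an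
involution of a set of odd size has a fixed point. Then `C` is the orthogonal direct sum of
`⟨e⟩` and `D = {c ∈ C | c ⬝ᵥ e = 0}` via `c = (c - (c ⬝ᵥ e) • e) + (c ⬝ᵥ e) • e`, so `D` is an LCD
subcode of codimension one, and the minimum distance of `C` is at most that of `D`.
-/

open Module

namespace Matrix

theorem det_eq_zero_of_isSymm_of_diag_eq_zero {R ι : Type*} [CommRing R] [CharP R 2]
    [Fintype ι] [DecidableEq ι] (hι : Odd (Fintype.card ι)) {M : Matrix ι ι R}
    (hM : M.IsSymm) (hdiag : ∀ i, M i i = 0) : M.det = 0 := by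
  rw [det_apply]
  refine Finset.sum_ninvolution (fun σ => σ⁻¹) (fun σ => ?_) (fun σ hterm hinv => ?_)
    (fun _ => Finset.mem_univ _) inv_inv
  · have hprod : ∏ i, M (σ⁻¹ i) i = ∏ i, M (σ i) i := by
      rw [← Equiv.prod_comp σ]
      simp [hM.apply]
    rw [Equiv.Perm.sign_inv, hprod, CharTwo.add_self_eq_zero]
  · have hσ : σ ^ 2 ^ 1 = 1 := by
      rw [pow_one, sq]
      nth_rw 1 [← hinv]
      exact inv_mul_cancel σ
    obtain ⟨i, hi⟩ :=
      Equiv.Perm.exists_fixed_point_of_prime (Nat.two_dvd_ne_zero.mpr (Nat.odd_iff.mp hι)) hσ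
    exact hterm (by rw [Finset.prod_eq_zero (Finset.mem_univ i) (by rw [hi, hdiag]), smul_zero])

end Matrix

open LinearMap (BilinForm) in
theorem LinearMap.BilinForm.exists_apply_self_ne_zero_of_odd_finrank {K V : Type*} [Field K]
    [CharP K 2] [AddCommGroup V] [Module K V] [FiniteDimensional K V] {B : BilinForm K V}
    (hB : B.Nondegenerate) (hsymm : B.IsSymm) (hodd : Odd (finrank K V)) :
    ∃ x, B x x ≠ 0 := by
  by_contra! hzero
  let b := Module.finBasis K V
  refine (nondegenerate_iff_det_ne_zero b).mp hB <|
    Matrix.det_eq_zero_of_isSymm_of_diag_eq_zero (by simpa using hodd)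
      ((isSymm_toMatrix_iff_isSymm b).mpr hsymm) fun i => ?_
  rw [toMatrix_apply, hzero]

section Codes

variable {n : ℕ} {C D : Submodule (ZMod 2) (Fin n → ZMod 2)} {e : Fin n → ZMod 2}

theorem isLCD.nondegenerate_restrict_dotProductBilin (hC : isLCD C) :
    (LinearMap.BilinForm.restrict (dotProductBilin (ZMod 2) (ZMod 2)) C).Nondegenerate := by
  have hsep : ∀ x : C, (∀ y : C, (x : Fin n → ZMod 2) ⬝ᵥ y = 0) → x = 0 := fun x hx =>
    Subtype.ext <| (Submodule.eq_bot_iff _).mp hC x ⟨x.2, fun c hc => hx ⟨c, hc⟩⟩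
  exact ⟨hsep, fun y hy => hsep y fun x => by rw [dotProduct_comm]; exact hy x⟩

theorem isLCD.exists_dotProduct_self_eq_one (hC : isLCD C)
    (hodd : Odd (finrank (ZMod 2) C)) : ∃ e ∈ C, e ⬝ᵥ e = 1 := by
  obtain ⟨x, hx⟩ := LinearMap.BilinForm.exists_apply_self_ne_zero_of_odd_finrank
    hC.nondegenerate_restrict_dotProductBilin ⟨fun x y => dotProduct_comm x.1 y.1⟩ hodd
  exact ⟨x, x.2, Fin.eq_one_of_ne_zero _ hx⟩

theorem mem_dualCode_span_singleton {v : Fin n → ZMod 2} :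
    v ∈ dualCode (ZMod 2 ∙ e) ↔ v ⬝ᵥ e = 0 := by
  refine ⟨fun hv => hv e (Submodule.mem_span_singleton_self e), fun hv c hc => ?_⟩
  obtain ⟨a, rfl⟩ := Submodule.mem_span_singleton.mp hc
  rw [dotProduct_smul, hv, smul_zero]

theorem sub_smul_mem_dualCode_span_singleton (hee : e ⬝ᵥ e = 1) (v : Fin n → ZMod 2) :
    v - (v ⬝ᵥ e) • e ∈ dualCode (ZMod 2 ∙ e) := by
  rw [mem_dualCode_span_singleton, sub_dotProduct, smul_dotProduct, hee, smul_eq_mul, mul_one,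
    sub_self]

theorem finrank_inf_dualCode_span_singleton_add_one (he : e ∈ C) (hee : e ⬝ᵥ e = 1) :
    finrank (ZMod 2) ↥(C ⊓ dualCode (ZMod 2 ∙ e)) + 1 = finrank (ZMod 2) C := by
  have hsup : C ⊓ dualCode (ZMod 2 ∙ e) ⊔ (ZMod 2 ∙ e) = C := by
    refine le_antisymm (sup_le inf_le_left ((Submodule.span_singleton_le_iff_mem _ _).mpr he))
      fun c hc => Submodule.mem_sup.mpr ⟨c - (c ⬝ᵥ e) • e,
        ⟨C.sub_mem hc (C.smul_mem _ he), sub_smul_mem_dualCode_span_singleton hee c⟩,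
        (c ⬝ᵥ e) • e, Submodule.smul_mem _ _ (Submodule.mem_span_singleton_self e),
        sub_add_cancel _ _⟩
  have hinf : C ⊓ dualCode (ZMod 2 ∙ e) ⊓ (ZMod 2 ∙ e) = ⊥ := by
    refine (Submodule.eq_bot_iff _).mpr fun v ⟨⟨_, hve⟩, hv⟩ => ?_
    obtain ⟨a, rfl⟩ := Submodule.mem_span_singleton.mp hv
    replace hve := mem_dualCode_span_singleton.mp hve
    rw [smul_dotProduct, hee, smul_eq_mul, mul_one] at hve
    rw [hve, zero_smul]
  have he0 : e ≠ 0 := by rintro rfl; simp at hee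
  have := Submodule.finrank_sup_add_finrank_inf_eq (C ⊓ dualCode (ZMod 2 ∙ e)) (ZMod 2 ∙ e)
  rwa [hsup, hinf, finrank_bot, finrank_span_singleton he0, add_zero, eq_comm] at this

theorem isLCD.inf_dualCode_span_singleton (hC : isLCD C) (he : e ∈ C) (hee : e ⬝ᵥ e = 1) :
    isLCD (C ⊓ dualCode (ZMod 2 ∙ e)) := by
  refine (Submodule.eq_bot_iff _).mpr fun v ⟨⟨hvC, hve⟩, hvD⟩ => ?_
  replace hve := mem_dualCode_span_singleton.mp hve
  refine (Submodule.eq_bot_iff _).mp hC v ⟨hvC, fun c hc => ?_⟩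
  -- `v` is orthogonal to `e` and to the projection of `c` along `e` into the subcode
  have hproj := hvD _ ⟨C.sub_mem hc (C.smul_mem _ he), sub_smul_mem_dualCode_span_singleton hee c⟩
  rwa [dotProduct_sub, dotProduct_smul, hve, smul_zero, sub_zero] at hproj

theorem isLCD.exists_le_finrank_eq_sub_one (hC : isLCD C) (hodd : Odd (finrank (ZMod 2) C)) :
    ∃ D ≤ C, finrank (ZMod 2) D = finrank (ZMod 2) C - 1 ∧ isLCD D := by
  obtain ⟨e, he, hee⟩ := hC.exists_dotProduct_self_eq_one hodd
  refine ⟨C ⊓ dualCode (ZMod 2 ∙ e), inf_le_left, ?_, hC.inf_dualCode_span_singleton he hee⟩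
  have := finrank_inf_dualCode_span_singleton_add_one he hee
  omega

theorem exists_hasMinDist (hC : C ≠ ⊥) : ∃ d, hasMinDist C d := by
  obtain ⟨v, hv, hv0⟩ := Submodule.exists_mem_ne_zero_of_ne_bot hC
  have hweights : {m | ∃ v ∈ C, v ≠ 0 ∧ hammingNorm v = m}.Nonempty :=
    ⟨hammingNorm v, v, hv, hv0, rfl⟩
  refine ⟨sInf _, fun u hu hu0 => ?_, Nat.sInf_mem hweights⟩
  exact Nat.sInf_le ⟨u, hu, hu0, rfl⟩

theorem hasMinDist.le_of_le {d d' : ℕ} (hC : hasMinDist C d) (hDC : D ≤ C)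
    (hD : hasMinDist D d') : d ≤ d' := by
  obtain ⟨_, v, hv, hv0, rfl⟩ := hD
  exact hC.1 v (hDC hv) hv0

theorem le_LCDmax {k d : ℕ} (hk : finrank (ZMod 2) C = k) (hd : hasMinDist C d)
    (hC : isLCD C) : d ≤ LCDmax n k := by
  refine le_csSup ⟨n, ?_⟩ ⟨C, hk, hd, hC⟩
  rintro d' ⟨C', -, ⟨-, v, -, -, rfl⟩, -⟩
  simpa using hammingNorm_le_card_fintype (x := v)

theorem LCDmax_le_of_forall_exists_subcode {k k' : ℕ} (hk' : k' ≠ 0)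
    (h : ∀ C : Submodule (ZMod 2) (Fin n → ZMod 2), finrank (ZMod 2) C = k → isLCD C →
      ∃ D ≤ C, finrank (ZMod 2) D = k' ∧ isLCD D) :
    LCDmax n k ≤ LCDmax n k' := by
  refine csSup_le' ?_
  rintro d ⟨C, hCk, hCd, hC⟩
  obtain ⟨D, hDC, hDk, hD⟩ := h C hCk hC
  obtain ⟨d', hd'⟩ := exists_hasMinDist (C := D) (by rintro rfl; simp [hk'.symm] at hDk)
  exact (hCd.le_of_le hDC hd').trans (le_LCDmax hDk hd' hD)

end Codes

theorem lcd_subcode_odd_general (n k : ℕ) (hk : 3 ≤ k) (hodd : Odd k) :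
    (∀ C : Submodule (ZMod 2) (Fin n → ZMod 2),
      Module.finrank (ZMod 2) ↥C = k → isLCD C →
      ∃ D : Submodule (ZMod 2) (Fin n → ZMod 2),
        D ≤ C ∧ Module.finrank (ZMod 2) ↥D = k - 1 ∧ isLCD D) ∧
    LCDmax n k ≤ LCDmax n (k - 1) := by
  have hsub : ∀ C : Submodule (ZMod 2) (Fin n → ZMod 2), finrank (ZMod 2) C = k → isLCD C →
      ∃ D ≤ C, finrank (ZMod 2) D = k - 1 ∧ isLCD D := by
    rintro C rfl hC
    exact hC.exists_le_finrank_eq_sub_one hodd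
  exact ⟨hsub, LCDmax_le_of_forall_exists_subcode (by omega) hsub⟩

/-- If `k ≥ 3` is odd, every binary `[n,k]` LCD code contains an `[n, k−1]` LCD subcode;
consequently `LCD[n,k] ≤ LCD[n,k−1]` for any `n ≥ k`. -/
theorem lcd_subcode_odd (n k : ℕ) (hk : 3 ≤ k) (hodd : Odd k) (hn : k ≤ n) :
    (∀ C : Submodule (ZMod 2) (Fin n → ZMod 2),
      Module.finrank (ZMod 2) ↥C = k → isLCD C →
      ∃ D : Submodule (ZMod 2) (Fin n → ZMod 2),
        D ≤ C ∧ Module.finrank (ZMod 2) ↥D = k - 1 ∧ isLCD D) ∧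
    LCDmax n k ≤ LCDmax n (k - 1) :=
  lcd_subcode_odd_general n k hk hodd
end
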